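/- arXiv:1702.01940 — 6 statements merged into one kernel-verified Lean document; each statement's English description precedes it below -/
import Mathlib

section
/- For quantum states ρ and σ on a finite-dimensional Hilbert space and any operator Λ with 0 ≤ Λ ≤ I, the absolute difference |√(Tr(Λρ)) − √(Tr(Λσ))| is at most the purified distance P(ρ,σ) = √(1 − F(ρ,σ)²), where F(ρ,σ) = ‖√ρ√σ‖₁ is the fidelity. -/
/-
Polar decomposition gives a unitary `W` with `F(ρ,σ) = Re Tr(W† √ρ √σ)`. Inserting
`1 = Λ + (1 - Λ)` between `√ρ` and `√σ` and applying Cauchy–Schwarz for the Hilbert–Schmidt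
inner product to each of the two terms gives `F ≤ √p √q + √(1-p) √(1-q)` with `p = Tr(Λρ)`,
`q = Tr(Λσ)`. Writing `p = sin² α`, `q = sin² β` with `α, β ∈ [0, π/2]`, the right side is
`cos(α - β)`, and `1 - cos²(α - β) = sin²(α - β) ≥ (sin α - sin β)²`.
-/

open Matrix
open scoped ComplexOrder Classical

variable {n : Type*} [Fintype n] [DecidableEq n]

/-- Square root of a positive semidefinite matrix (junk value `0` otherwise). -/
noncomputable def msqrt (A : Matrix n n ℂ) : Matrix n n ℂ :=
  if h : A.PosSemidef then
    (h.1.eigenvectorUnitary : Matrix n n ℂ) *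
      diagonal ((↑) ∘ Real.sqrt ∘ h.1.eigenvalues) * (star h.1.eigenvectorUnitary : Matrix n n ℂ)
  else 0

/-- Trace norm `‖A‖₁ = Tr √(AᴴA)`. -/
noncomputable def traceNorm (A : Matrix n n ℂ) : ℝ :=
  (msqrt (Aᴴ * A)).trace.re

/-- Fidelity `F(ρ,σ) = ‖√ρ√σ‖₁`. -/
noncomputable def fidelity (ρ σ : Matrix n n ℂ) : ℝ :=
  traceNorm (msqrt ρ * msqrt σ)

/-- Purified distance `P(ρ,σ) = √(1 − F(ρ,σ)²)`. -/
noncomputable def purifiedDist (ρ σ : Matrix n n ℂ) : ℝ :=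
  Real.sqrt (1 - (fidelity ρ σ) ^ 2)

open scoped InnerProductSpace

section HilbertSchmidt

variable {𝕜 l m : Type*} [RCLike 𝕜] [Fintype l] [Fintype m]

lemma inner_toLp_vec (X Y : Matrix l m 𝕜) :
    ⟪WithLp.toLp 2 X.vec, WithLp.toLp 2 Y.vec⟫_𝕜 = (Xᴴ * Y).trace := by
  rw [EuclideanSpace.inner_toLp_toLp, dotProduct_comm, star_vec_dotProduct_vec]

lemma re_trace_conjTranspose_mul_self (X : Matrix l m 𝕜) :
    RCLike.re (Xᴴ * X).trace = ‖WithLp.toLp 2 X.vec‖ ^ 2 := by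
  rw [← inner_toLp_vec, inner_self_eq_norm_sq]

lemma re_trace_conjTranspose_mul_le (X Y : Matrix l m 𝕜) :
    RCLike.re (Xᴴ * Y).trace ≤ √(RCLike.re (Xᴴ * X).trace) * √(RCLike.re (Yᴴ * Y).trace) := by
  rw [re_trace_conjTranspose_mul_self, re_trace_conjTranspose_mul_self,
    Real.sqrt_sq (norm_nonneg _), Real.sqrt_sq (norm_nonneg _), ← inner_toLp_vec]
  exact re_inner_le_norm _ _

end HilbertSchmidt

lemma orthonormal_normalize_of_pairwise_inner_eq_zero {𝕜 E ι : Type*} [RCLike 𝕜]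
    [NormedAddCommGroup E] [InnerProductSpace 𝕜 E]
    {c : ι → E} (hc : Pairwise fun i j => ⟪c i, c j⟫_𝕜 = 0) :
    Orthonormal 𝕜 ({i | c i ≠ 0}.domRestrict fun i => (‖c i‖⁻¹ : 𝕜) • c i) := by
  refine ⟨fun ⟨i, hi⟩ => norm_smul_inv_norm hi, fun ⟨i, _⟩ ⟨j, _⟩ hij => ?_⟩
  simp [inner_smul_left, inner_smul_right, hc (Subtype.coe_ne_coe.mpr hij)]

lemma exists_mem_unitaryGroup_eq_mul_diagonal_sqrt {𝕜 m : Type*} [RCLike 𝕜] [Fintype m]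
    [DecidableEq m] (N : Matrix m m 𝕜) (d : m → ℝ) (hN : Nᴴ * N = diagonal (RCLike.ofReal ∘ d)) :
    ∃ U ∈ unitaryGroup m 𝕜, N = U * diagonal (RCLike.ofReal ∘ Real.sqrt ∘ d) := by
  set c : m → EuclideanSpace 𝕜 m := fun i => WithLp.toLp 2 (Nᵀ i)
  have hc : ∀ i j, ⟪c i, c j⟫_𝕜 = (Nᴴ * N) i j := fun i j => by
    simp [c, EuclideanSpace.inner_toLp_toLp, mul_apply, dotProduct, mul_comm]
  have hnorm : ∀ i, ‖c i‖ = √(d i) := fun i => by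
    rw [← Real.sqrt_sq (norm_nonneg _), ← inner_self_eq_norm_sq (𝕜 := 𝕜), hc, hN]
    simp
  have horth : Pairwise fun i j => ⟪c i, c j⟫_𝕜 = 0 := fun i j hij =>
    (hc i j).trans (by rw [hN, diagonal_apply_ne _ hij])
  -- `b` extends the normalized nonzero columns of `N` to an orthonormal basis.
  obtain ⟨b, hb⟩ := (orthonormal_normalize_of_pairwise_inner_eq_zero horth)
    |>.exists_orthonormalBasis_extension_of_card_eq (by simp)
  have hcb : ∀ i, c i = (‖c i‖ : 𝕜) • b i := fun i => by
    by_cases hi : c i = 0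
    · simp [hi]
    · rw [hb i hi, smul_smul, mul_inv_cancel₀ (by simpa using hi), one_smul]
  refine ⟨(EuclideanSpace.basisFun m 𝕜).toBasis.toMatrix b.toBasis,
    (EuclideanSpace.basisFun m 𝕜).toMatrix_orthonormalBasis_mem_unitary b, ?_⟩
  ext k i
  have hki : N k i = (‖c i‖ : 𝕜) * b i k := congrArg (· k) (hcb i)
  rw [mul_diagonal, hki, hnorm, mul_comm]
  rfl

section MatrixSqrt

open scoped MatrixOrder

lemma msqrt_eq_sqrt {A : Matrix n n ℂ} (hA : A.PosSemidef) : msqrt A = CFC.sqrt A := by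
  rw [msqrt, dif_pos hA, CFC.sqrt_eq_real_sqrt A hA.nonneg, cfcₙ_eq_cfc, hA.1.cfc_eq]
  rfl

lemma msqrt_mul_self {A : Matrix n n ℂ} (hA : A.PosSemidef) : msqrt A * msqrt A = A := by
  rw [msqrt_eq_sqrt hA, CFC.sqrt_mul_sqrt_self A hA.nonneg]

lemma posSemidef_msqrt {A : Matrix n n ℂ} (hA : A.PosSemidef) : (msqrt A).PosSemidef := by
  rw [msqrt_eq_sqrt hA]; exact (CFC.sqrt_nonneg A).posSemidef

end MatrixSqrt

lemma exists_mem_unitaryGroup_conjTranspose_mul_eq_msqrt (M : Matrix n n ℂ) :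
    ∃ W ∈ unitaryGroup n ℂ, Wᴴ * M = msqrt (Mᴴ * M) := by
  have hH : (Mᴴ * M).PosSemidef := posSemidef_conjTranspose_mul_self M
  set V : Matrix n n ℂ := (hH.1.eigenvectorUnitary : Matrix n n ℂ)
  have hV : V ∈ unitaryGroup n ℂ := hH.1.eigenvectorUnitary.2
  have hdiag : (M * V)ᴴ * (M * V) = diagonal (RCLike.ofReal ∘ hH.1.eigenvalues) := by
    rw [← hH.1.conjStarAlgAut_star_eigenvectorUnitary, Unitary.conjStarAlgAut_star_apply,
      conjTranspose_mul, ← star_eq_conjTranspose]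
    simp only [Matrix.mul_assoc, V]
  obtain ⟨U, hU, hMV⟩ := exists_mem_unitaryGroup_eq_mul_diagonal_sqrt _ _ hdiag
  refine ⟨U * star V, mul_mem hU (Unitary.star_mem hV), ?_⟩
  calc (U * star V)ᴴ * M = V * star U * (M * V) * star V := by
        rw [Matrix.mul_assoc _ (M * V), Matrix.mul_assoc M, Unitary.mul_star_self_of_mem hV,
          Matrix.mul_one, conjTranspose_mul, ← star_eq_conjTranspose, ← star_eq_conjTranspose,
          star_star]
    _ = V * diagonal ((↑) ∘ Real.sqrt ∘ hH.1.eigenvalues) * star V := by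
        rw [hMV, Matrix.mul_assoc V, ← Matrix.mul_assoc (star U), Unitary.star_mul_self_of_mem hU,
          Matrix.one_mul]
        rfl
    _ = msqrt (Mᴴ * M) := by rw [msqrt, dif_pos hH]

lemma traceNorm_nonneg (M : Matrix n n ℂ) : 0 ≤ traceNorm M :=
  (RCLike.nonneg_iff.mp (posSemidef_msqrt (posSemidef_conjTranspose_mul_self M)).trace_nonneg).1

lemma trace_conjTranspose_mul_self_mul_unitary (X : Matrix n n ℂ) {W : Matrix n n ℂ}
    (hW : W ∈ unitaryGroup n ℂ) : ((X * W)ᴴ * (X * W)).trace = (Xᴴ * X).trace := by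
  have hWW : W * Wᴴ = 1 := Unitary.mul_star_self_of_mem hW
  rw [conjTranspose_mul, Matrix.mul_assoc, trace_mul_comm, Matrix.mul_assoc, Matrix.mul_assoc,
    hWW, Matrix.mul_one]

lemma trace_conjTranspose_mul_self_msqrt_mul_msqrt {P ρ : Matrix n n ℂ} (hP : P.PosSemidef)
    (hρ : ρ.PosSemidef) :
    ((msqrt P * msqrt ρ)ᴴ * (msqrt P * msqrt ρ)).trace = (P * ρ).trace :=
  calc _ = (msqrt ρ * (msqrt P * msqrt P) * msqrt ρ).trace := by
        rw [conjTranspose_mul, (posSemidef_msqrt hP).1.eq, (posSemidef_msqrt hρ).1.eq]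
        simp only [Matrix.mul_assoc]
    _ = ((msqrt P * msqrt P) * (msqrt ρ * msqrt ρ)).trace := by
        rw [trace_mul_cycle, trace_mul_comm]
    _ = (P * ρ).trace := by rw [msqrt_mul_self hP, msqrt_mul_self hρ]

lemma re_trace_mul_nonneg {P ρ : Matrix n n ℂ} (hP : P.PosSemidef) (hρ : ρ.PosSemidef) :
    0 ≤ (P * ρ).trace.re := by
  rw [← trace_conjTranspose_mul_self_msqrt_mul_msqrt hP hρ]
  exact (RCLike.nonneg_iff (K := ℂ)).mp (posSemidef_conjTranspose_mul_self _).trace_nonneg |>.1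

lemma re_trace_conjTranspose_mul_msqrt_mul_msqrt_le {ρ σ P W : Matrix n n ℂ}
    (hρ : ρ.PosSemidef) (hσ : σ.PosSemidef) (hP : P.PosSemidef) (hW : W ∈ unitaryGroup n ℂ) :
    (Wᴴ * (msqrt ρ * P * msqrt σ)).trace.re ≤ √(P * ρ).trace.re * √(P * σ).trace.re := by
  have hfactor : Wᴴ * (msqrt ρ * P * msqrt σ)
      = (msqrt P * msqrt ρ * W)ᴴ * (msqrt P * msqrt σ) := by
    conv_lhs => rw [← msqrt_mul_self hP]
    rw [conjTranspose_mul, conjTranspose_mul, (posSemidef_msqrt hP).1.eq,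
      (posSemidef_msqrt hρ).1.eq]
    simp only [Matrix.mul_assoc]
  have := re_trace_conjTranspose_mul_le (msqrt P * msqrt ρ * W) (msqrt P * msqrt σ)
  rwa [trace_conjTranspose_mul_self_mul_unitary _ hW,
    trace_conjTranspose_mul_self_msqrt_mul_msqrt hP hρ,
    trace_conjTranspose_mul_self_msqrt_mul_msqrt hP hσ, ← hfactor] at this

lemma fidelity_le_of_add_eq_one {ρ σ P Q : Matrix n n ℂ} (hρ : ρ.PosSemidef) (hσ : σ.PosSemidef)
    (hP : P.PosSemidef) (hQ : Q.PosSemidef) (hPQ : P + Q = 1) :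
    fidelity ρ σ ≤
      √(P * ρ).trace.re * √(P * σ).trace.re + √(Q * ρ).trace.re * √(Q * σ).trace.re := by
  obtain ⟨W, hW, hpolar⟩ := exists_mem_unitaryGroup_conjTranspose_mul_eq_msqrt (msqrt ρ * msqrt σ)
  have hsplit : msqrt ρ * msqrt σ = msqrt ρ * P * msqrt σ + msqrt ρ * Q * msqrt σ := by
    rw [← Matrix.add_mul, ← Matrix.mul_add, hPQ, Matrix.mul_one]
  calc fidelity ρ σ = (Wᴴ * (msqrt ρ * msqrt σ)).trace.re := by rw [fidelity, traceNorm, hpolar]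
    _ = (Wᴴ * (msqrt ρ * P * msqrt σ)).trace.re + (Wᴴ * (msqrt ρ * Q * msqrt σ)).trace.re := by
        rw [hsplit, Matrix.mul_add, trace_add, Complex.add_re]
    _ ≤ _ := add_le_add (re_trace_conjTranspose_mul_msqrt_mul_msqrt_le hρ hσ hP hW)
        (re_trace_conjTranspose_mul_msqrt_mul_msqrt_le hρ hσ hQ hW)

lemma sub_le_mul_sub_mul_of_sq_add_sq {a b c d : ℝ} (ha : 0 ≤ a) (hb : 0 ≤ b) (hc : 0 ≤ c)
    (hd : 0 ≤ d) (hac : a ^ 2 + c ^ 2 = 1) (hbd : b ^ 2 + d ^ 2 = 1) (hba : b ≤ a) :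
    a - b ≤ a * d - b * c := by
  have hcd : c ≤ d := by nlinarith
  nlinarith [mul_nonneg (mul_nonneg hb (by nlinarith : (0:ℝ) ≤ 1 - c)) (sub_nonneg.mpr hcd),
    mul_nonneg (mul_nonneg ha hb) (sub_nonneg.mpr hba)]

lemma abs_sub_le_abs_mul_sub_mul_of_sq_add_sq {a b c d : ℝ} (ha : 0 ≤ a) (hb : 0 ≤ b)
    (hc : 0 ≤ c) (hd : 0 ≤ d) (hac : a ^ 2 + c ^ 2 = 1) (hbd : b ^ 2 + d ^ 2 = 1) :
    |a - b| ≤ |a * d - b * c| := by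
  rcases le_total b a with hba | hab
  · rw [abs_of_nonneg (sub_nonneg.mpr hba)]
    exact (sub_le_mul_sub_mul_of_sq_add_sq ha hb hc hd hac hbd hba).trans (le_abs_self _)
  · rw [abs_sub_comm, abs_sub_comm (a * d), abs_of_nonneg (sub_nonneg.mpr hab)]
    exact (sub_le_mul_sub_mul_of_sq_add_sq hb ha hd hc hbd hac hab).trans (le_abs_self _)

lemma abs_sqrt_sub_sqrt_le {p q F : ℝ} (hp0 : 0 ≤ p) (hp1 : p ≤ 1) (hq0 : 0 ≤ q) (hq1 : q ≤ 1)
    (hF0 : 0 ≤ F) (hF : F ≤ √p * √q + √(1 - p) * √(1 - q)) :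
    |√p - √q| ≤ √(1 - F ^ 2) := by
  have hac : √p ^ 2 + √(1 - p) ^ 2 = 1 := by
    rw [Real.sq_sqrt hp0, Real.sq_sqrt (by linarith)]; ring
  have hbd : √q ^ 2 + √(1 - q) ^ 2 = 1 := by
    rw [Real.sq_sqrt hq0, Real.sq_sqrt (by linarith)]; ring
  refine Real.abs_le_sqrt ?_
  calc (√p - √q) ^ 2 ≤ (√p * √(1 - q) - √q * √(1 - p)) ^ 2 :=
        sq_le_sq.mpr (abs_sub_le_abs_mul_sub_mul_of_sq_add_sq (by positivity) (by positivity)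
          (by positivity) (by positivity) hac hbd)
    _ = 1 - (√p * √q + √(1 - p) * √(1 - q)) ^ 2 := by
        linear_combination (√q ^ 2 + √(1 - q) ^ 2) * hac + hbd
    _ ≤ 1 - F ^ 2 := by gcongr

/-- For quantum states `ρ, σ` and an operator `0 ≤ Λ ≤ I`,
`|√(Tr(Λρ)) − √(Tr(Λσ))| ≤ P(ρ,σ)`. -/
theorem measurement_stability (ρ σ Λ : Matrix n n ℂ)
    (hρ : ρ.PosSemidef) (hρ1 : ρ.trace = 1)
    (hσ : σ.PosSemidef) (hσ1 : σ.trace = 1)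
    (hΛ : Λ.PosSemidef) (hΛI : (1 - Λ).PosSemidef) :
    |Real.sqrt ((Λ * ρ).trace.re) - Real.sqrt ((Λ * σ).trace.re)| ≤ purifiedDist ρ σ := by
  have hcompl : ∀ τ : Matrix n n ℂ, τ.trace = 1 →
      ((1 - Λ) * τ).trace.re = 1 - (Λ * τ).trace.re := fun τ hτ => by
    rw [Matrix.sub_mul, Matrix.one_mul, trace_sub, hτ, Complex.sub_re, Complex.one_re]
  have hle : ∀ τ : Matrix n n ℂ, τ.PosSemidef → τ.trace = 1 → (Λ * τ).trace.re ≤ 1 :=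
    fun τ hτ hτ1 => sub_nonneg.mp (hcompl τ hτ1 ▸ re_trace_mul_nonneg hΛI hτ)
  have hF := fidelity_le_of_add_eq_one hρ hσ hΛ hΛI (add_sub_cancel Λ 1)
  rw [hcompl ρ hρ1, hcompl σ hσ1] at hF
  exact abs_sqrt_sub_sqrt_le (re_trace_mul_nonneg hΛ hρ) (hle ρ hρ hρ1) (re_trace_mul_nonneg hΛ hσ)
    (hle σ hσ hσ1) (traceNorm_nonneg _) hF
end

section
/- Hayashi–Nagaoka operator inequality: if S, T are positive semidefinite operators on a finite-dimensional Hilbert space with 0 ≤ S ≤ I, then I − (S+T)^{−1/2} S (S+T)^{−1/2} ≤ 2(I − S) + 4T, where inverses are taken on the support of S+T (generalized inverse). -/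
/-! Write `M = S + T` and `P = X² M`. Since `X` commutes with `M`, `XM = M^{1/2}` and `P` is the
support projection of `M`. Then
`2(1 - S) + 4T - (1 - XSX) = (1 - P) + 4(XM - S) + (X - 2)T(X - 2) + 2(X - 1)S(X - 1)`,
and every summand is nonnegative: `1 - P` is a projection, the last two are conjugates of
`T, S ≥ 0`, and `XM ≥ S` by operator monotonicity of the square root, because
`(XM)² = M ≥ S ≥ S²` when `0 ≤ S ≤ 1`. -/

open Matrix Kronecker
open scoped ComplexOrder Classical

variable {n : Type*} [Fintype n] [DecidableEq n]

theorem isStarProjection_mul_of_mul_mul_eq {R : Type*} [Ring R] [StarRing R] {y m : R}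
    (hy : IsSelfAdjoint y) (hm : IsSelfAdjoint m) (hc : Commute m y) (h : y * m * y = y) :
    IsStarProjection (y * m) where
  isIdempotentElem := by rw [IsIdempotentElem, ← mul_assoc, h]
  isSelfAdjoint := by rw [IsSelfAdjoint, star_mul, hy.star_eq, hm.star_eq, hc.eq]

theorem hayashi_nagaoka_decomposition {R : Type*} [Ring R] {S T X : R}
    (hc : Commute X (S + T)) :
    2 • (1 - S) + 4 • T - (1 - X * S * X) =
      (1 - X * X * (S + T)) + 4 • (X * (S + T) - S) + (X - 2) * T * (X - 2)
        + 2 • ((X - 1) * S * (X - 1)) := by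
  have hXMX : X * (S + T) * X = X * X * (S + T) := by rw [mul_assoc, ← hc.eq, mul_assoc]
  calc 2 • (1 - S) + 4 • T - (1 - X * S * X)
      = (1 - X * X * (S + T)) + 4 • (X * (S + T) - S) + (X - 2) * T * (X - 2)
          + 2 • ((X - 1) * S * (X - 1)) + (X * X * (S + T) - X * (S + T) * X)
          + 2 • ((S + T) * X - X * (S + T)) := by noncomm_ring
    _ = _ := by rw [hXMX, hc.eq]; simp

section CStarAlgebra

variable {A : Type*} [CStarAlgebra A] [PartialOrder A] [StarOrderedRing A]

theorem Commute.of_mul_self_right {a b : A} (ha : 0 ≤ a) (h : Commute b (a * a)) :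
    Commute b a := by
  simpa [← CFC.sqrt_eq_cfc, CFC.sqrt_mul_self a ha] using (h.symm.cfc_nnreal NNReal.sqrt).symm

theorem CFC.le_of_mul_self_le_mul_self {a b : A} (ha : 0 ≤ a) (hb : 0 ≤ b)
    (h : a * a ≤ b * b) : a ≤ b := by
  simpa [CFC.sqrt_mul_self, ha, hb] using CFC.sqrt_le_sqrt _ _ h

theorem mul_self_le_self {a : A} (ha₀ : 0 ≤ a) (ha₁ : a ≤ 1) : a * a ≤ a := by
  have := ((Commute.one_right a).sub_right (Commute.refl a)).mul_nonneg ha₀ (sub_nonneg.2 ha₁)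
  rwa [mul_sub, mul_one, sub_nonneg] at this

theorem CStarAlgebra.hayashi_nagaoka {S T X : A} (hS : 0 ≤ S) (hS₁ : S ≤ 1) (hT : 0 ≤ T)
    (hX : 0 ≤ X) (hcomm : Commute (S + T) (X * X))
    (hpinv₁ : (S + T) * (X * X) * (S + T) = S + T)
    (hpinv₂ : X * X * (S + T) * (X * X) = X * X) :
    1 - X * S * X ≤ 2 • (1 - S) + 4 • T := by
  have hM : 0 ≤ S + T := add_nonneg hS hT
  have hXM : Commute X (S + T) := (hcomm.of_mul_self_right hX).symm
  have hXsa : IsSelfAdjoint X := .of_nonneg hX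
  have hP : IsStarProjection (X * X * (S + T)) :=
    isStarProjection_mul_of_mul_mul_eq hXsa.mul_self_nonneg.isSelfAdjoint hM.isSelfAdjoint
      hcomm hpinv₂
  have hXM_sq : X * (S + T) * (X * (S + T)) = S + T := by
    rw [mul_assoc, ← mul_assoc (S + T), ← hXM.eq, ← mul_assoc, ← mul_assoc, ← hcomm.eq, hpinv₁]
  have hS_le : S ≤ X * (S + T) := by
    refine CFC.le_of_mul_self_le_mul_self hS (hXM.mul_nonneg hX hM) ?_
    calc S * S ≤ S := mul_self_le_self hS hS₁
      _ ≤ S + T := le_add_of_nonneg_right hT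
      _ = _ := hXM_sq.symm
  rw [← sub_nonneg, hayashi_nagaoka_decomposition hXM]
  refine add_nonneg (add_nonneg (add_nonneg hP.one_sub_nonneg ?_) ?_) ?_
  · exact nsmul_nonneg (sub_nonneg.2 hS_le) 4
  · exact (hXsa.sub (.ofNat 2)).conjugate_nonneg hT
  · exact nsmul_nonneg ((hXsa.sub (.one A)).conjugate_nonneg hS) 2

end CStarAlgebra

/-- Hayashi–Nagaoka operator inequality: if `0 ≤ S ≤ I`, `T ≥ 0`, and `X` is the square root
of the Moore–Penrose pseudoinverse of `S + T` (characterized by the conditions on `X * X`),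
then `I − X S X ≤ 2(I − S) + 4T`. -/
theorem hayashi_nagaoka (S T X : Matrix n n ℂ)
    (hS : S.PosSemidef) (hSI : (1 - S).PosSemidef) (hT : T.PosSemidef)
    (hX : X.PosSemidef)
    (hcomm : (S + T) * (X * X) = (X * X) * (S + T))
    (hpinv1 : (S + T) * (X * X) * (S + T) = S + T)
    (hpinv2 : (X * X) * (S + T) * (X * X) = X * X) :
    ((2 : ℂ) • (1 - S) + (4 : ℂ) • T - (1 - X * S * X)).PosSemidef := by
  open scoped Matrix.Norms.L2Operator MatrixOrder in
  · rw [← Matrix.nonneg_iff_posSemidef, sub_nonneg]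
    simp only [ofNat_smul_eq_nsmul]
    exact CStarAlgebra.hayashi_nagaoka hS.nonneg (sub_nonneg.1 hSI.nonneg) hT.nonneg hX.nonneg
      hcomm hpinv1 hpinv2
end

section
/- Quantum Pinsker-type inequality (fidelity form): for quantum states ρ, σ on a finite-dimensional Hilbert space with supp(ρ) ⊆ supp(σ), F(ρ,σ) ≥ 2^{−D(ρ‖σ)/2}, where F is fidelity and D is the quantum relative entropy in bits. -/
open Matrix Kronecker
open scoped ComplexOrder Classical

variable {n : Type*} [Fintype n] [DecidableEq n]

/-- Matrix logarithm (base 2) via the functional calculus of a Hermitian matrix. -/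
noncomputable def mlog2 (A : Matrix n n ℂ) : Matrix n n ℂ :=
  if h : A.IsHermitian then h.cfc (fun x => Real.logb 2 x) else 0

/-- Quantum relative entropy (base 2): `D(ρ‖σ) = Tr(ρ log₂ ρ) − Tr(ρ log₂ σ)`. -/
noncomputable def relEnt (ρ σ : Matrix n n ℂ) : ℝ :=
  ((ρ * mlog2 ρ).trace - (ρ * mlog2 σ).trace).re

/-!
Diagonalise `ρ = ∑ pᵢ |aᵢ⟩⟨aᵢ|` and `σ = ∑ qⱼ |bⱼ⟩⟨bⱼ|` and put `cᵢⱼ = |⟨aᵢ, bⱼ⟩|²`, a doubly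
stochastic matrix. The Nussbaum–Szkoła distributions `P(i, j) = pᵢ cᵢⱼ` and `Q(i, j) = qⱼ cᵢⱼ`
turn both sides into classical quantities: `D(ρ‖σ) = D(P‖Q)` and `Re Tr √ρ√σ = ∑ √(P Q)`.
Jensen's inequality for the convex function `2^x` with weights `P` gives
`2^{-D(P‖Q)/2} ≤ ∑ P √(Q / P) = ∑ √(P Q)`, and `Re Tr X ≤ ‖X‖₁` concludes.
-/

open Finset Real
open scoped InnerProductSpace

section Classical

variable {ι : Type*} [Fintype ι]

noncomputable def classicalRelEnt (P Q : ι → ℝ) : ℝ :=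
  ∑ i, P i * (logb 2 (P i) - logb 2 (Q i))

noncomputable def classicalFidelity (P Q : ι → ℝ) : ℝ :=
  ∑ i, √(P i * Q i)

lemma mul_two_rpow_half_logb_sub_logb {p q : ℝ} (hp : 0 ≤ p) (hq : 0 ≤ q)
    (hpq : q = 0 → p = 0) :
    p * 2 ^ ((logb 2 q - logb 2 p) / 2) = √(p * q) := by
  rcases hp.eq_or_lt with rfl | hp
  · simp
  have hq : 0 < q := hq.lt_of_ne fun h => hp.ne' (hpq h.symm)
  rw [← logb_div hq.ne' hp.ne', div_eq_mul_one_div, rpow_mul zero_le_two,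
    rpow_logb two_pos (by norm_num) (div_pos hq hp), ← sqrt_eq_rpow,
    show p * q = p ^ 2 * (q / p) by field_simp, sqrt_mul (sq_nonneg p), sqrt_sq hp.le]

theorem two_rpow_neg_half_classicalRelEnt_le_classicalFidelity {P Q : ι → ℝ} (hP : 0 ≤ P)
    (hP1 : ∑ i, P i = 1) (hQ : 0 ≤ Q) (hPQ : ∀ i, Q i = 0 → P i = 0) :
    (2 : ℝ) ^ (-classicalRelEnt P Q / 2) ≤ classicalFidelity P Q := by
  set t : ι → ℝ := fun i => (logb 2 (Q i) - logb 2 (P i)) / 2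
  have hexp : -classicalRelEnt P Q / 2 = ∑ i, P i * t i := by
    simp only [classicalRelEnt, t, neg_div, sum_div, ← sum_neg_distrib, mul_div_assoc']
    exact sum_congr rfl fun i _ => by ring
  calc (2 : ℝ) ^ (-classicalRelEnt P Q / 2) = 2 ^ ∑ i, P i * t i := by rw [hexp]
    _ ≤ ∑ i, P i * 2 ^ t i := by
      simpa using (convexOn_rpow_left two_pos).map_sum_le (t := univ) (w := P) (p := t)
        (fun i _ => hP i) hP1 (fun _ _ => Set.mem_univ _)
    _ = classicalFidelity P Q :=
      sum_congr rfl fun i _ => mul_two_rpow_half_logb_sub_logb (hP i) (hQ i) (hPQ i)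

lemma mul_mul_logb_mul_sub_logb_mul {b p q c : ℝ} (hpq : q = 0 → p * c = 0) :
    p * c * (logb b (p * c) - logb b (q * c)) = p * c * (logb b p - logb b q) := by
  rcases eq_or_ne (p * c) 0 with h | h
  · rw [h, zero_mul, zero_mul]
  have hq : q ≠ 0 := fun hq => h (hpq hq)
  rw [logb_mul (left_ne_zero_of_mul h) (right_ne_zero_of_mul h),
    logb_mul hq (right_ne_zero_of_mul h)]
  ring

end Classical

namespace Matrix.IsHermitian

variable {A B : Matrix n n ℂ} (hA : A.IsHermitian) (hB : B.IsHermitian)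

noncomputable def eigenOverlap (i j : n) : ℝ :=
  ‖⟪hA.eigenvectorBasis i, hB.eigenvectorBasis j⟫_ℂ‖ ^ 2

lemma eigenOverlap_nonneg (i j : n) : 0 ≤ hA.eigenOverlap hB i j :=
  sq_nonneg _

lemma sum_eigenOverlap_right (i : n) : ∑ j, hA.eigenOverlap hB i j = 1 := by
  simp [eigenOverlap, hB.eigenvectorBasis.sum_sq_norm_inner_left,
    hA.eigenvectorBasis.orthonormal.1 i]

lemma toEuclideanLin_eigenvectorBasis (i : n) :
    toEuclideanLin A (hA.eigenvectorBasis i) = hA.eigenvalues i • hA.eigenvectorBasis i := by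
  ext1
  simp [hA.mulVec_eigenvectorBasis]

lemma star_eigenvectorUnitary_mul_eigenvectorUnitary_apply (i j : n) :
    (star (hA.eigenvectorUnitary : Matrix n n ℂ) * hB.eigenvectorUnitary) i j =
      ⟪hA.eigenvectorBasis i, hB.eigenvectorBasis j⟫_ℂ := by
  simp [mul_apply, EuclideanSpace.inner_eq_star_dotProduct, dotProduct, mul_comm]

lemma trace_cfc (f : ℝ → ℝ) : (hA.cfc f).trace = ∑ i, (f (hA.eigenvalues i) : ℂ) := by
  rw [Matrix.IsHermitian.cfc, Unitary.conjStarAlgAut_apply, trace_mul_cycle,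
    Unitary.coe_star_mul_self, one_mul, trace_diagonal]
  rfl

lemma trace_cfc_mul_cfc (f g : ℝ → ℝ) :
    (hA.cfc f * hB.cfc g).trace =
      ∑ i, ∑ j, (f (hA.eigenvalues i) * g (hB.eigenvalues j) * hA.eigenOverlap hB i j : ℂ) := by
  set U : Matrix n n ℂ := (hA.eigenvectorUnitary : Matrix n n ℂ)
  set V : Matrix n n ℂ := (hB.eigenvectorUnitary : Matrix n n ℂ)
  set W := star U * V with hW
  have hconj : hA.cfc f * hB.cfc g = U * (diagonal (RCLike.ofReal ∘ f ∘ hA.eigenvalues) * W *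
      diagonal (RCLike.ofReal ∘ g ∘ hB.eigenvalues) * star W) * star U := by
    have hUU : U * star U = 1 := Unitary.coe_mul_star_self _
    simp only [Matrix.IsHermitian.cfc, Unitary.conjStarAlgAut_apply, hW, star_mul, star_star,
      Matrix.mul_assoc, hUU, Matrix.mul_one]
    rfl
  rw [hconj, trace_mul_cycle, ← Matrix.mul_assoc, Unitary.coe_star_mul_self, Matrix.one_mul]
  simp only [trace, diag_apply, mul_apply, diagonal_apply, star_apply, ite_mul, mul_ite, zero_mul,
    mul_zero, sum_ite_eq, sum_ite_eq', mem_univ, if_true, Function.comp_apply, RCLike.star_def,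
    RCLike.ofReal_eq_complex_ofReal]
  refine sum_congr rfl fun i _ => sum_congr rfl fun j _ => ?_
  rw [eigenOverlap, Complex.ofReal_pow, ← Complex.mul_conj', hW,
    star_eigenvectorUnitary_mul_eigenvectorUnitary_apply]
  ring

lemma eigenvalues_mul_eigenOverlap_eq_zero (hker : ∀ v, B *ᵥ v = 0 → A *ᵥ v = 0)
    (i : n) {j : n} (hj : hB.eigenvalues j = 0) :
    hA.eigenvalues i * hA.eigenOverlap hB i j = 0 := by
  have hAb : toEuclideanLin A (hB.eigenvectorBasis j) = 0 := by
    have := hker _ (by rw [hB.mulVec_eigenvectorBasis, hj, zero_smul])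
    ext1
    simp [this]
  have h : (hA.eigenvalues i : ℂ) * ⟪hA.eigenvectorBasis i, hB.eigenvectorBasis j⟫_ℂ = 0 :=
    calc _ = ⟪toEuclideanLin A (hA.eigenvectorBasis i), hB.eigenvectorBasis j⟫_ℂ := by
          rw [hA.toEuclideanLin_eigenvectorBasis, RCLike.real_smul_eq_coe_smul (K := ℂ),
            inner_smul_left, RCLike.conj_ofReal, RCLike.ofReal_eq_complex_ofReal]
      _ = 0 := by rw [isSymmetric_toEuclideanLin_iff.2 hA, hAb, inner_zero_right]
  rcases mul_eq_zero.1 h with h | h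
  · simp [Complex.ofReal_eq_zero.1 h]
  · simp [eigenOverlap, h]

end Matrix.IsHermitian

lemma msqrt_eq_cfc {A : Matrix n n ℂ} (hA : A.PosSemidef) : msqrt A = hA.1.cfc Real.sqrt :=
  dif_pos hA

lemma mlog2_eq_cfc {A : Matrix n n ℂ} (hA : A.IsHermitian) : mlog2 A = hA.cfc (logb 2) :=
  dif_pos hA

lemma norm_toEuclideanLin_eigenvectorBasis_conjTranspose_mul_self (A : Matrix n n ℂ) (j : n) :
    ‖toEuclideanLin A ((isHermitian_conjTranspose_mul_self A).eigenvectorBasis j)‖ =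
      √((isHermitian_conjTranspose_mul_self A).eigenvalues j) := by
  set hB := isHermitian_conjTranspose_mul_self A
  have h : ‖toEuclideanLin A (hB.eigenvectorBasis j)‖ ^ 2 = hB.eigenvalues j := by
    rw [@norm_sq_eq_re_inner ℂ, ← LinearMap.adjoint_inner_right,
      ← toEuclideanLin_conjTranspose_eq_adjoint, ← LinearMap.comp_apply, ← toLpLin_mul_same,
      hB.toEuclideanLin_eigenvectorBasis, RCLike.real_smul_eq_coe_smul (K := ℂ),
      inner_smul_right, inner_self_eq_norm_sq_to_K, hB.eigenvectorBasis.orthonormal.1 j]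
    simp
  rw [← h, sqrt_sq (norm_nonneg _)]

lemma re_trace_le_traceNorm (A : Matrix n n ℂ) : A.trace.re ≤ traceNorm A := by
  have hB := posSemidef_conjTranspose_mul_self A
  have htraceNorm : traceNorm A = ∑ j, √(hB.1.eigenvalues j) := by
    rw [traceNorm, msqrt_eq_cfc hB, hB.1.trace_cfc, ← Complex.ofReal_sum, Complex.ofReal_re]
  rw [htraceNorm, ← trace_toLin_eq A (EuclideanSpace.basisFun n ℂ).toBasis,
    ← toEuclideanLin_eq_toLin_orthonormal, LinearMap.trace_eq_sum_inner _ hB.1.eigenvectorBasis,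
    Complex.re_sum]
  gcongr with j
  refine (re_inner_le_norm (𝕜 := ℂ) _ _).trans_eq ?_
  rw [hB.1.eigenvectorBasis.orthonormal.1 j, one_mul,
    norm_toEuclideanLin_eigenvectorBasis_conjTranspose_mul_self]

section NussbaumSzkola

variable {A B : Matrix n n ℂ}

noncomputable def nussbaumSzkolaLeft (hA : A.IsHermitian) (hB : B.IsHermitian) : n × n → ℝ :=
  fun ij => hA.eigenvalues ij.1 * hA.eigenOverlap hB ij.1 ij.2

noncomputable def nussbaumSzkolaRight (hA : A.IsHermitian) (hB : B.IsHermitian) : n × n → ℝ :=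
  fun ij => hB.eigenvalues ij.2 * hA.eigenOverlap hB ij.1 ij.2

lemma nussbaumSzkolaLeft_nonneg (hA : A.PosSemidef) (hB : B.IsHermitian) :
    0 ≤ nussbaumSzkolaLeft hA.1 hB :=
  fun _ => mul_nonneg (hA.eigenvalues_nonneg _) (hA.1.eigenOverlap_nonneg hB _ _)

lemma nussbaumSzkolaRight_nonneg (hA : A.IsHermitian) (hB : B.PosSemidef) :
    0 ≤ nussbaumSzkolaRight hA hB.1 :=
  fun _ => mul_nonneg (hB.eigenvalues_nonneg _) (hA.eigenOverlap_nonneg hB.1 _ _)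

lemma sum_nussbaumSzkolaLeft (hA : A.IsHermitian) (hB : B.IsHermitian) :
    ∑ ij, nussbaumSzkolaLeft hA hB ij = A.trace.re := by
  simp [nussbaumSzkolaLeft, Fintype.sum_prod_type, ← mul_sum, hA.sum_eigenOverlap_right,
    hA.trace_eq_sum_eigenvalues]

lemma nussbaumSzkolaLeft_eq_zero_of_right (hA : A.IsHermitian) (hB : B.IsHermitian)
    (hker : ∀ v, B *ᵥ v = 0 → A *ᵥ v = 0) (ij : n × n) (h : nussbaumSzkolaRight hA hB ij = 0) :
    nussbaumSzkolaLeft hA hB ij = 0 := by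
  rcases mul_eq_zero.1 h with hq | hc
  · exact hA.eigenvalues_mul_eigenOverlap_eq_zero hB hker _ hq
  · rw [nussbaumSzkolaLeft, hc, mul_zero]

lemma relEnt_eq_classicalRelEnt (hA : A.IsHermitian) (hB : B.IsHermitian)
    (hker : ∀ v, B *ᵥ v = 0 → A *ᵥ v = 0) :
    relEnt A B = classicalRelEnt (nussbaumSzkolaLeft hA hB) (nussbaumSzkolaRight hA hB) := by
  have hcont (f : ℝ → ℝ) : ContinuousOn f (spectrum ℝ A) := A.finite_real_spectrum.continuousOn f
  have hAA : A * mlog2 A = hA.cfc (fun x => x * logb 2 x) := by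
    rw [mlog2_eq_cfc hA, ← hA.cfc_eq, ← hA.cfc_eq, cfc_mul _ _ _ (hcont _) (hcont _), cfc_id' ℝ A]
  have hAB : A * mlog2 B = hA.cfc id * hB.cfc (logb 2) := by
    rw [mlog2_eq_cfc hB, ← hA.cfc_eq, cfc_id ℝ A]
  have hrow (i : n) : hA.eigenvalues i * logb 2 (hA.eigenvalues i) =
      ∑ j, hA.eigenvalues i * hA.eigenOverlap hB i j * logb 2 (hA.eigenvalues i) := by
    rw [← sum_mul, ← mul_sum, hA.sum_eigenOverlap_right hB, mul_one]
  rw [relEnt, hAA, hAB, hA.trace_cfc, hA.trace_cfc_mul_cfc, classicalRelEnt,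
    Fintype.sum_prod_type]
  simp only [nussbaumSzkolaLeft, nussbaumSzkolaRight, mul_mul_logb_mul_sub_logb_mul
      (fun hq => hA.eigenvalues_mul_eigenOverlap_eq_zero hB hker _ hq),
    id, ← Complex.ofReal_mul, ← Complex.ofReal_sum, ← Complex.ofReal_sub, Complex.ofReal_re,
    hrow, ← sum_sub_distrib]
  exact sum_congr rfl fun i _ => sum_congr rfl fun j _ => by ring

lemma classicalFidelity_eq_re_trace_msqrt_mul_msqrt (hA : A.PosSemidef) (hB : B.PosSemidef) :
    classicalFidelity (nussbaumSzkolaLeft hA.1 hB.1) (nussbaumSzkolaRight hA.1 hB.1) =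
      (msqrt A * msqrt B).trace.re := by
  rw [msqrt_eq_cfc hA, msqrt_eq_cfc hB, hA.1.trace_cfc_mul_cfc, classicalFidelity,
    Fintype.sum_prod_type]
  simp only [← Complex.ofReal_mul, ← Complex.ofReal_sum, Complex.ofReal_re]
  refine sum_congr rfl fun i _ => sum_congr rfl fun j _ => ?_
  rw [nussbaumSzkolaLeft, nussbaumSzkolaRight, mul_mul_mul_comm,
    sqrt_mul (mul_nonneg (hA.eigenvalues_nonneg i) (hB.eigenvalues_nonneg j)),
    sqrt_mul_self (hA.1.eigenOverlap_nonneg hB.1 i j), sqrt_mul (hA.eigenvalues_nonneg i)]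

end NussbaumSzkola

theorem pinsker_fidelity_general (ρ σ : Matrix n n ℂ)
    (hρ : ρ.PosSemidef) (hρ1 : ρ.trace = 1)
    (hσ : σ.PosSemidef)
    (hsupp : ∀ v : n → ℂ, σ.mulVec v = 0 → ρ.mulVec v = 0) :
    (2 : ℝ) ^ (-(relEnt ρ σ) / 2) ≤ fidelity ρ σ := by
  set P := nussbaumSzkolaLeft hρ.1 hσ.1
  set Q := nussbaumSzkolaRight hρ.1 hσ.1
  have hP1 : ∑ ij, P ij = 1 := by rw [sum_nussbaumSzkolaLeft, hρ1, Complex.one_re]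
  calc (2 : ℝ) ^ (-(relEnt ρ σ) / 2)
      = 2 ^ (-classicalRelEnt P Q / 2) := by rw [relEnt_eq_classicalRelEnt hρ.1 hσ.1 hsupp]
    _ ≤ classicalFidelity P Q :=
        two_rpow_neg_half_classicalRelEnt_le_classicalFidelity (nussbaumSzkolaLeft_nonneg hρ hσ.1)
          hP1 (nussbaumSzkolaRight_nonneg hρ.1 hσ)
          (nussbaumSzkolaLeft_eq_zero_of_right hρ.1 hσ.1 hsupp)
    _ = (msqrt ρ * msqrt σ).trace.re := classicalFidelity_eq_re_trace_msqrt_mul_msqrt hρ hσ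
    _ ≤ fidelity ρ σ := re_trace_le_traceNorm _

/-- Quantum Pinsker-type inequality in fidelity form: `F(ρ,σ) ≥ 2^{−D(ρ‖σ)/2}`. -/
theorem pinsker_fidelity (ρ σ : Matrix n n ℂ)
    (hρ : ρ.PosSemidef) (hρ1 : ρ.trace = 1)
    (hσ : σ.PosSemidef) (hσ1 : σ.trace = 1)
    (hsupp : ∀ v : n → ℂ, σ.mulVec v = 0 → ρ.mulVec v = 0) :
    (2 : ℝ) ^ (-(relEnt ρ σ) / 2) ≤ fidelity ρ σ :=
  pinsker_fidelity_general ρ σ hρ hρ1 hσ hsupp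
end

section
/- Combinatorial bound in the i.i.d. position-based decoding: for positive integers n, w with w > 2n and any real F ≥ 0, (1/C(w,n)) · Σ_{t=0}^{n} C(n,t)·C(w−n, n−t)·2^{F·t} ≤ (1 + 2^F·n/(w−2n))^n, where C(a,b) denotes the binomial coefficient. -/
/-!
Since `C(w-n, n) ≤ C(w, n)`, it suffices to show `C(w-n, n-t) · (w-2n)^t ≤ C(w-n, n) · n^t`, which follows by
induction on `t` from `C(m, k) · (m-n) ≤ C(m, k+1) · (k+1)` for `k ≤ n`. Then the summand with index `t`
is at most `C(n, t) · (2^F · n/(w-2n))^t`, and the binomial theorem sums these to the right-hand side.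
-/

namespace Nat

theorem choose_mul_sub_le_choose_succ_mul {m n k : ℕ} (hk : k ≤ n) :
    m.choose k * (m - n) ≤ m.choose (k + 1) * (k + 1) := by
  rw [choose_succ_right_eq]
  exact Nat.mul_le_mul_left _ (by omega)

theorem choose_sub_mul_pow_le {m n t : ℕ} (ht : t ≤ n) :
    m.choose (n - t) * (m - n) ^ t ≤ m.choose n * n ^ t := by
  induction t with
  | zero => simp
  | succ t ih =>
    have step : m.choose (n - (t + 1)) * (m - n) ≤ m.choose (n - t) * n :=
      calc m.choose (n - (t + 1)) * (m - n)
          ≤ m.choose (n - (t + 1) + 1) * (n - (t + 1) + 1) :=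
            choose_mul_sub_le_choose_succ_mul (Nat.sub_le _ _)
        _ = m.choose (n - t) * (n - t) := by rw [show n - (t + 1) + 1 = n - t by omega]
        _ ≤ m.choose (n - t) * n := Nat.mul_le_mul_left _ (Nat.sub_le _ _)
    calc m.choose (n - (t + 1)) * (m - n) ^ (t + 1)
        = m.choose (n - (t + 1)) * (m - n) * (m - n) ^ t := by ring
      _ ≤ m.choose (n - t) * n * (m - n) ^ t := Nat.mul_le_mul_right _ step
      _ = m.choose (n - t) * (m - n) ^ t * n := by ring
      _ ≤ m.choose n * n ^ t * n := Nat.mul_le_mul_right _ (ih (by omega))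
      _ = m.choose n * n ^ (t + 1) := by ring

end Nat

theorem choose_sub_div_choose_le {n w t : ℕ} (h : 2 * n < w) (ht : t ≤ n) :
    ((w - n).choose (n - t) : ℝ) / w.choose n ≤ ((n : ℝ) / ((w : ℝ) - 2 * n)) ^ t := by
  have hgap : (0 : ℝ) < (w : ℝ) - 2 * n := by
    have : (2 * n : ℝ) < w := by exact_mod_cast h
    linarith
  have hchoose : (0 : ℝ) < w.choose n := by exact_mod_cast Nat.choose_pos (by omega : n ≤ w)
  have hnat : (w - n).choose (n - t) * (w - n - n) ^ t ≤ w.choose n * n ^ t :=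
    (Nat.choose_sub_mul_pow_le ht).trans
      (Nat.mul_le_mul_right _ (Nat.choose_le_choose n (Nat.sub_le w n)))
  rw [show w - n - n = w - 2 * n by omega] at hnat
  have hreal := (Nat.cast_le (α := ℝ)).2 hnat
  push_cast [Nat.cast_sub (by omega : 2 * n ≤ w)] at hreal
  rw [div_pow, div_le_div_iff₀ hchoose (pow_pos hgap t)]
  linarith

theorem iid_combinatorial_bound_general (n w : ℕ) (h : 2 * n < w) (F : ℝ) :
    (1 / (w.choose n : ℝ)) * ∑ t ∈ Finset.range (n + 1),
        (n.choose t : ℝ) * ((w - n).choose (n - t) : ℝ) * (2:ℝ) ^ (F * t)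
      ≤ (1 + (2:ℝ) ^ F * n / ((w : ℝ) - 2 * n)) ^ n := by
  rw [add_comm (1 : ℝ), add_pow, Finset.mul_sum]
  refine Finset.sum_le_sum fun t ht => ?_
  have hratio := choose_sub_div_choose_le h (Finset.mem_range_succ_iff.mp ht)
  rw [Real.rpow_mul zero_le_two, Real.rpow_natCast, one_pow, mul_one, mul_div_assoc, mul_pow]
  calc 1 / (w.choose n : ℝ) * ((n.choose t : ℝ) * ((w - n).choose (n - t) : ℝ) * ((2:ℝ) ^ F) ^ t)
      = (n.choose t : ℝ) * ((2:ℝ) ^ F) ^ t * (((w - n).choose (n - t) : ℝ) / w.choose n) := by ring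
    _ ≤ (n.choose t : ℝ) * ((2:ℝ) ^ F) ^ t * ((n : ℝ) / ((w : ℝ) - 2 * n)) ^ t := by gcongr
    _ = ((2:ℝ) ^ F) ^ t * ((n : ℝ) / ((w : ℝ) - 2 * n)) ^ t * n.choose t := by ring

/-- Combinatorial bound in i.i.d. position-based decoding. -/
theorem iid_combinatorial_bound (n w : ℕ) (h : 2 * n < w) (F : ℝ) (hF : 0 ≤ F) :
    (1 / (w.choose n : ℝ)) * ∑ t ∈ Finset.range (n + 1),
        (n.choose t : ℝ) * ((w - n).choose (n - t) : ℝ) * (2:ℝ) ^ (F * t)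
      ≤ (1 + (2:ℝ) ^ F * n / ((w : ℝ) - 2 * n)) ^ n :=
  iid_combinatorial_bound_general n w h F
end

section
/- Support-restricted positive part: let ρ' be a positive semidefinite operator supported in the range of an orthogonal projector Π that commutes with a positive semidefinite operator σ, where σ's eigenvectors include the range of Π. Then for any R, the projector onto the positive part {ρ' − 2^R σ}₊ equals the projector onto the positive part {ρ' − 2^R ΠσΠ}₊. -/
/-!
Write `P` for the projector and `Q = 1 - P`. Since `P` commutes with both `ρ'` and `σ`, the matrix
`A = ρ' - 2^R σ` splits as `PAP + QAQ`, where `PAP = ρ' - 2^R PσP` and `QAQ = -2^R QσQ ≤ 0`.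
The two corners are orthogonal (`PAP · QAQ = 0`). On the finitely many eigenvalues involved, the
step function defining the positive-part projector coincides with one polynomial without constant
term, and such a polynomial is additive on orthogonal pairs; so the projector of `A` is the sum of
those of the corners, and that of the negative semidefinite corner `QAQ` vanishes.
-/

open Matrix Kronecker
open scoped ComplexOrder Classical

variable {n : Type*} [Fintype n] [DecidableEq n]

/-- The orthogonal projector onto the span of eigenvectors of a Hermitian matrix with
positive eigenvalues (junk value `0` for non-Hermitian input). -/
noncomputable def posProj (O : Matrix n n ℂ) : Matrix n n ℂ :=
  if h : O.IsHermitian then h.cfc (fun x => if 0 < x then 1 else 0) else 0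

section OrthogonalSum

open Polynomial

variable {A : Type*} [Ring A] {x y : A}

lemma add_pow_succ_of_mul_eq_zero (hxy : x * y = 0) (hyx : y * x = 0) (k : ℕ) :
    (x + y) ^ (k + 1) = x ^ (k + 1) + y ^ (k + 1) := by
  induction k with
  | zero => simp
  | succ k ih =>
    have hx : x ^ (k + 1) * y = 0 := by rw [pow_succ, mul_assoc, hxy, mul_zero]
    have hy : y ^ (k + 1) * x = 0 := by rw [pow_succ, mul_assoc, hyx, mul_zero]
    rw [pow_succ, ih, add_mul, mul_add, mul_add, hx, hy, add_zero, zero_add, ← pow_succ,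
      ← pow_succ]

lemma Polynomial.aeval_add_of_mul_eq_zero {R : Type*} [CommSemiring R] [Algebra R A]
    (hxy : x * y = 0) (hyx : y * x = 0) {p : R[X]} (hp : p.coeff 0 = 0) :
    aeval (x + y) p = aeval x p + aeval y p := by
  simp only [aeval_eq_sum_range, ← Finset.sum_add_distrib]
  refine Finset.sum_congr rfl fun i _ => ?_
  cases i with
  | zero => simp [hp]
  | succ k => rw [add_pow_succ_of_mul_eq_zero hxy hyx, smul_add]

end OrthogonalSum

section FiniteSpectrum

open Polynomial

variable {R A : Type*} {p : A → Prop} [Field R] [StarRing R] [MetricSpace R]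
  [IsTopologicalSemiring R] [ContinuousStar R] [TopologicalSpace A] [Ring A] [StarRing A]
  [Algebra R A] [ContinuousFunctionalCalculus R A p]

lemma cfc_eq_aeval_interpolate {f : R → R} {a : A} (ha : p a) {s : Finset R}
    (hs : spectrum R a ⊆ s) : cfc f a = aeval a (Lagrange.interpolate s id f) := by
  rw [← cfc_polynomial _ a ha]
  exact cfc_congr fun r hr =>
    (Lagrange.eval_interpolate_at_node f (Set.injOn_id _) (hs hr)).symm

lemma cfc_add_of_mul_eq_zero {f : R → R} (hf : f 0 = 0) {x y : A} (hx : p x) (hy : p y)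
    (hxy' : p (x + y)) (hxy : x * y = 0) (hyx : y * x = 0) (hxfin : (spectrum R x).Finite)
    (hyfin : (spectrum R y).Finite) (hxyfin : (spectrum R (x + y)).Finite) :
    cfc f (x + y) = cfc f x + cfc f y := by
  set s : Finset R := insert 0 (hxfin.toFinset ∪ hyfin.toFinset ∪ hxyfin.toFinset)
  rw [cfc_eq_aeval_interpolate (s := s) hxy' fun r hr => by simp [s, hr],
    cfc_eq_aeval_interpolate (s := s) hx fun r hr => by simp [s, hr],
    cfc_eq_aeval_interpolate (s := s) hy fun r hr => by simp [s, hr]]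
  refine Polynomial.aeval_add_of_mul_eq_zero hxy hyx ?_
  rw [coeff_zero_eq_eval_zero]
  exact (Lagrange.eval_interpolate_at_node f (Set.injOn_id _)
    (Finset.mem_insert_self 0 _)).trans hf

end FiniteSpectrum

namespace IsIdempotentElem

variable {A : Type*} [Ring A] {e : A}

lemma mul_mul_self_mul_one_sub (he : IsIdempotentElem e) (a : A) : e * a * e * (1 - e) = 0 := by
  rw [mul_assoc, he.mul_one_sub_self, mul_zero]

lemma one_sub_mul_mul_mul_self (he : IsIdempotentElem e) (a : A) :
    (1 - e) * (e * a * e) = 0 := by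
  rw [← mul_assoc, ← mul_assoc, he.one_sub_mul_self, zero_mul, zero_mul]

lemma mul_mul_self_mul_one_sub_mul_mul_one_sub (he : IsIdempotentElem e) (a b : A) :
    e * a * e * ((1 - e) * b * (1 - e)) = 0 := by
  rw [← mul_assoc, ← mul_assoc, he.mul_mul_self_mul_one_sub, zero_mul, zero_mul]

lemma commute_mul_mul_self (he : IsIdempotentElem e) (a : A) : Commute e (e * a * e) := by
  show e * (e * a * e) = e * a * e * e
  rw [← mul_assoc, ← mul_assoc, he.eq, mul_assoc (e * a) e e, he.eq]

lemma mul_mul_self_add_one_sub_mul_mul_one_sub (he : IsIdempotentElem e) {a : A}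
    (ha : Commute e a) : e * a * e + (1 - e) * a * (1 - e) = a := by
  have hcorner : e * a * e = e * a := by rw [mul_assoc, ← ha.eq, ← mul_assoc, he.eq]
  have hcorner' : (1 - e) * a * (1 - e) = (1 - e) * a := by
    rw [mul_assoc, ← ((Commute.one_left a).sub_left ha).eq, ← mul_assoc, he.one_sub.eq]
  rw [hcorner, hcorner', ← add_mul, add_sub_cancel, one_mul]

end IsIdempotentElem

lemma posProj_eq_cfc {O : Matrix n n ℂ} (hO : O.IsHermitian) :
    posProj O = cfc (fun x : ℝ => if 0 < x then (1 : ℝ) else 0) O := by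
  rw [posProj, dif_pos hO, hO.cfc_eq]

lemma posProj_add_of_mul_eq_zero {X Y : Matrix n n ℂ} (hX : X.IsHermitian) (hY : Y.IsHermitian)
    (hXY : X * Y = 0) : posProj (X + Y) = posProj X + posProj Y := by
  have hYX : Y * X = 0 := by simpa [hX.eq, hY.eq] using congrArg conjTranspose hXY
  rw [posProj_eq_cfc hX, posProj_eq_cfc hY, posProj_eq_cfc (hX.add hY)]
  exact cfc_add_of_mul_eq_zero (by simp) hX hY (hX.add hY) hXY hYX X.finite_real_spectrum
    Y.finite_real_spectrum (X + Y).finite_real_spectrum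

open scoped MatrixOrder in
lemma posProj_eq_zero_of_posSemidef_neg {O : Matrix n n ℂ} (hO : (-O).PosSemidef) :
    posProj O = 0 := by
  have hOH : O.IsHermitian := by simpa using hO.1.neg
  rw [posProj_eq_cfc hOH, ← cfc_zero ℝ O]
  refine cfc_congr fun r hr => ?_
  have hr' : 0 ≤ -r :=
    spectrum_nonneg_of_nonneg hO.nonneg (by rwa [← spectrum.neg_eq, Set.neg_mem_neg])
  simp [not_lt.mpr (neg_nonneg.mp hr')]

/-- Support-restricted positive part: if `ρ'` is supported in the range of a projector `Pr`
commuting with `σ`, the positive-part projectors of `ρ' - 2^R σ` and `ρ' - 2^R PrσPr` agree. -/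
theorem posProj_support_restrict (ρ' σ Pr : Matrix n n ℂ) (R : ℝ)
    (hρ' : ρ'.PosSemidef) (hσ : σ.PosSemidef)
    (hPrH : Pr.IsHermitian) (hPr2 : Pr * Pr = Pr)
    (hcomm : Pr * σ = σ * Pr)
    (hsupp : Pr * ρ' * Pr = ρ') :
    posProj (ρ' - ((2:ℝ) ^ R) • σ) = posProj (ρ' - ((2:ℝ) ^ R) • (Pr * σ * Pr)) := by
  set c : ℝ := (2:ℝ) ^ R
  set A := ρ' - c • σ
  set Q := 1 - Pr
  have hP : IsIdempotentElem Pr := hPr2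
  have hQH : Q.IsHermitian := isHermitian_one.sub hPrH
  have hAH : A.IsHermitian := hρ'.1.sub (hσ.smul (by positivity : (0 : ℝ) ≤ c)).1
  have hcornerH {E : Matrix n n ℂ} (hE : E.IsHermitian) : (E * A * E).IsHermitian := by
    simpa only [hE.eq] using isHermitian_conjTranspose_mul_mul E hAH
  have hPA : Commute Pr A :=
    (hsupp ▸ hP.commute_mul_mul_self ρ').sub_right ((show Commute Pr σ from hcomm).smul_right c)
  have hPAP : Pr * A * Pr = ρ' - c • (Pr * σ * Pr) := by
    rw [mul_sub, sub_mul, hsupp, mul_smul_comm, smul_mul_assoc]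
  have hQAQ : -(Q * A * Q) = c • (Q * σ * Q) := by
    rw [mul_sub Q ρ', sub_mul _ _ Q, ← hsupp, hP.one_sub_mul_mul_mul_self, zero_mul,
      mul_smul_comm, smul_mul_assoc, zero_sub, neg_neg]
  have hQAQ_psd : (-(Q * A * Q)).PosSemidef := by
    rw [hQAQ]
    exact (hQH.eq ▸ hσ.conjTranspose_mul_mul_same Q).smul (by positivity)
  calc posProj A = posProj (Pr * A * Pr + Q * A * Q) := by
        rw [hP.mul_mul_self_add_one_sub_mul_mul_one_sub hPA]
    _ = posProj (Pr * A * Pr) := by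
        rw [posProj_add_of_mul_eq_zero (hcornerH hPrH) (hcornerH hQH)
          (hP.mul_mul_self_mul_one_sub_mul_mul_one_sub A A),
          posProj_eq_zero_of_posSemidef_neg hQAQ_psd, add_zero]
    _ = _ := by rw [hPAP]
end

section
/- Marginal bound after sandwiching: let ρ_{AB} be a bipartite density matrix, Π_A and Π_B spectral projectors of ρ_A and ρ_B respectively with Tr((Π_A⊗Π_B)ρ_{AB}) ≥ 1 − c > 0, and define ρ'_{AB} = (Π_A⊗Π_B)ρ_{AB}(Π_A⊗Π_B)/Tr((Π_A⊗Π_B)ρ_{AB}). Then ρ'_B ≤ (1/(1−c))·ρ_B in the Loewner order (and symmetrically ρ'_A ≤ (1/(1−c))·ρ_A). -/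
open Matrix Kronecker
open scoped ComplexOrder Classical

variable {n : Type*} [Fintype n] [DecidableEq n]

/-- Partial trace over the second tensor factor. -/
noncomputable def ptraceSnd {P Q : Type*} [Fintype P] [Fintype Q]
    (M : Matrix (P × Q) (P × Q) ℂ) : Matrix P P ℂ :=
  fun i j => ∑ k, M (i, k) (j, k)

/-- Partial trace over the first tensor factor. -/
noncomputable def ptraceFst {P Q : Type*} [Fintype P] [Fintype Q]
    (M : Matrix (P × Q) (P × Q) ℂ) : Matrix Q Q ℂ :=
  fun i j => ∑ k, M (k, i) (k, j)

/-!
Write `S = PA ⊗ PB = (PA ⊗ 1)(1 ⊗ PB)`. The partial trace over `B` pulls out `A`-local factors,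
`Tr_B(SρS) = PA · Tr_B((1 ⊗ PB)ρ(1 ⊗ PB)) · PA`, and is cyclic in `B`-local ones, so the
sandwiches of `ρ` by `1 ⊗ PB` and by `1 ⊗ (1 - PB)` have partial traces summing to `ρ_A`; hence
`Tr_B(SρS) ≤ PA ρ_A PA`. As `PA` commutes with `ρ_A`, `ρ_A - PA ρ_A PA = (1 - PA) ρ_A (1 - PA) ≥ 0`.
Normalising by `Tr(Sρ) ≥ 1 - c` rather than by `1 - c` only shrinks the left side. The bound on
`ρ'_B` is the same statement after swapping the tensor factors.
-/

open scoped MatrixOrder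

theorem IsSelfAdjoint.kronecker {R l m : Type*} [CommRing R] [StarRing R]
    {X : Matrix l l R} {Y : Matrix m m R} (hX : IsSelfAdjoint X) (hY : IsSelfAdjoint Y) :
    IsSelfAdjoint (X ⊗ₖ Y) := by
  rw [IsSelfAdjoint, star_eq_conjTranspose, conjTranspose_kronecker]
  exact congrArg₂ (· ⊗ₖ ·) hX hY

theorem IsStarProjection.conjugate_le_self_of_commute {R : Type*} [Ring R] [PartialOrder R]
    [StarRing R] [StarOrderedRing R] {p a : R} (hp : IsStarProjection p) (ha : 0 ≤ a)
    (hpa : Commute p a) : p * a * p ≤ a := by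
  have hsplit : a - p * a * p = (1 - p) * a * (1 - p) := by
    have hpap : p * a * p = p * a := by
      rw [mul_assoc, ← hpa.eq, ← mul_assoc, hp.isIdempotentElem.eq]
    rw [show (1 - p) * a * (1 - p) = a - p * a - a * p + p * a * p by noncomm_ring, hpap, hpa.eq]
    abel
  rw [← sub_nonneg, hsplit]
  exact hp.one_sub.isSelfAdjoint.conjugate_nonneg ha

section PartialTrace

variable {P Q : Type*} [Fintype P] [Fintype Q]

theorem ptraceSnd_add (M N : Matrix (P × Q) (P × Q) ℂ) :
    ptraceSnd (M + N) = ptraceSnd M + ptraceSnd N := by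
  ext i j
  simp [ptraceSnd, Finset.sum_add_distrib]

theorem ptraceSnd_smul {R : Type*} [DistribSMul R ℂ] (r : R) (M : Matrix (P × Q) (P × Q) ℂ) :
    ptraceSnd (r • M) = r • ptraceSnd M := by
  ext i j
  simp [ptraceSnd, Finset.smul_sum]

theorem ptraceFst_smul {R : Type*} [DistribSMul R ℂ] (r : R) (M : Matrix (P × Q) (P × Q) ℂ) :
    ptraceFst (r • M) = r • ptraceFst M := by
  ext i j
  simp [ptraceFst, Finset.smul_sum]

theorem ptraceSnd_eq_sum_submatrix (M : Matrix (P × Q) (P × Q) ℂ) :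
    ptraceSnd M = ∑ k, M.submatrix (·, k) (·, k) := by
  ext i j
  simp [ptraceSnd, Matrix.sum_apply]

theorem ptraceSnd_nonneg {M : Matrix (P × Q) (P × Q) ℂ} (hM : 0 ≤ M) : 0 ≤ ptraceSnd M := by
  rw [ptraceSnd_eq_sum_submatrix]
  exact Finset.sum_nonneg fun k _ => (hM.posSemidef.submatrix _).nonneg

theorem ptraceSnd_kronecker_one_conj (X Y : Matrix P P ℂ) (M : Matrix (P × Q) (P × Q) ℂ) :
    ptraceSnd ((X ⊗ₖ (1 : Matrix Q Q ℂ)) * M * (Y ⊗ₖ (1 : Matrix Q Q ℂ))) =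
      X * ptraceSnd M * Y := by
  ext i j
  simp only [ptraceSnd, mul_apply, kroneckerMap_apply, one_apply, Fintype.sum_prod_type,
    mul_ite, mul_zero, mul_one, ite_mul, zero_mul, Finset.sum_ite_eq, Finset.sum_ite_eq',
    Finset.mem_univ, if_true, Finset.mul_sum, Finset.sum_mul]
  rw [Finset.sum_comm]
  exact Finset.sum_congr rfl fun _ _ => Finset.sum_comm

theorem ptraceSnd_one_kronecker_mul_comm (Y : Matrix Q Q ℂ) (M : Matrix (P × Q) (P × Q) ℂ) :
    ptraceSnd (((1 : Matrix P P ℂ) ⊗ₖ Y) * M) = ptraceSnd (M * ((1 : Matrix P P ℂ) ⊗ₖ Y)) := by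
  ext i j
  simp only [ptraceSnd, mul_apply, kroneckerMap_apply, one_apply, Fintype.sum_prod_type,
    mul_ite, mul_zero, one_mul, ite_mul, zero_mul, Finset.sum_ite_eq, Finset.sum_ite_eq',
    Finset.sum_ite_irrel, Finset.sum_const_zero, Finset.mem_univ, if_true]
  rw [Finset.sum_comm]
  exact Finset.sum_congr rfl fun k _ => Finset.sum_congr rfl fun b _ => mul_comm _ _

theorem ptraceSnd_one_kronecker_conj (Y Z : Matrix Q Q ℂ) (M : Matrix (P × Q) (P × Q) ℂ) :
    ptraceSnd (((1 : Matrix P P ℂ) ⊗ₖ Y) * M * ((1 : Matrix P P ℂ) ⊗ₖ Z)) =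
      ptraceSnd (M * ((1 : Matrix P P ℂ) ⊗ₖ (Z * Y))) := by
  rw [mul_assoc, ptraceSnd_one_kronecker_mul_comm, mul_assoc, ← mul_kronecker_mul, one_mul]

theorem ptraceSnd_one_kronecker_conj_le {M : Matrix (P × Q) (P × Q) ℂ} (hM : 0 ≤ M)
    {R : Matrix Q Q ℂ} (hR : IsStarProjection R) :
    ptraceSnd (((1 : Matrix P P ℂ) ⊗ₖ R) * M * ((1 : Matrix P P ℂ) ⊗ₖ R)) ≤ ptraceSnd M := by
  have hsum : ptraceSnd (((1 : Matrix P P ℂ) ⊗ₖ R) * M * ((1 : Matrix P P ℂ) ⊗ₖ R)) +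
      ptraceSnd (((1 : Matrix P P ℂ) ⊗ₖ (1 - R)) * M * ((1 : Matrix P P ℂ) ⊗ₖ (1 - R))) =
      ptraceSnd M := by
    rw [ptraceSnd_one_kronecker_conj, ptraceSnd_one_kronecker_conj, hR.isIdempotentElem.eq,
      hR.one_sub.isIdempotentElem.eq, ← ptraceSnd_add, ← mul_add, ← kronecker_add,
      add_sub_cancel, one_kronecker_one, mul_one]
  rw [← hsum]
  exact le_add_of_nonneg_right <| ptraceSnd_nonneg <|
    ((IsSelfAdjoint.one _).kronecker hR.one_sub.isSelfAdjoint).conjugate_nonneg hM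

theorem ptraceSnd_kronecker_conj_le {ρ : Matrix (P × Q) (P × Q) ℂ} (hρ : 0 ≤ ρ)
    {PA : Matrix P P ℂ} {PB : Matrix Q Q ℂ} (hPA : IsStarProjection PA)
    (hPB : IsStarProjection PB) (hPAρ : Commute PA (ptraceSnd ρ)) :
    ptraceSnd ((PA ⊗ₖ PB) * ρ * (PA ⊗ₖ PB)) ≤ ptraceSnd ρ := by
  have hfactor : (PA ⊗ₖ PB) * ρ * (PA ⊗ₖ PB) = (PA ⊗ₖ (1 : Matrix Q Q ℂ)) *
      (((1 : Matrix P P ℂ) ⊗ₖ PB) * ρ * ((1 : Matrix P P ℂ) ⊗ₖ PB)) *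
      (PA ⊗ₖ (1 : Matrix Q Q ℂ)) := by
    simp only [← mul_assoc, ← mul_kronecker_mul, mul_one, one_mul]
    rw [mul_assoc _ (1 ⊗ₖ PB), ← mul_kronecker_mul, one_mul, mul_one]
  calc ptraceSnd ((PA ⊗ₖ PB) * ρ * (PA ⊗ₖ PB))
      = PA * ptraceSnd (((1 : Matrix P P ℂ) ⊗ₖ PB) * ρ * ((1 : Matrix P P ℂ) ⊗ₖ PB)) * PA := by
        rw [hfactor, ptraceSnd_kronecker_one_conj]
    _ ≤ PA * ptraceSnd ρ * PA :=
        hPA.isSelfAdjoint.conjugate_le_conjugate (ptraceSnd_one_kronecker_conj_le hρ hPB)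
    _ ≤ ptraceSnd ρ := hPA.conjugate_le_self_of_commute (ptraceSnd_nonneg hρ) hPAρ

theorem ptraceFst_eq_ptraceSnd_submatrix_swap (M : Matrix (P × Q) (P × Q) ℂ) :
    ptraceFst M = ptraceSnd (M.submatrix Prod.swap Prod.swap) :=
  rfl

theorem ptraceFst_nonneg {M : Matrix (P × Q) (P × Q) ℂ} (hM : 0 ≤ M) : 0 ≤ ptraceFst M :=
  ptraceSnd_nonneg (hM.posSemidef.submatrix Prod.swap).nonneg

theorem ptraceFst_kronecker_conj_le {ρ : Matrix (P × Q) (P × Q) ℂ} (hρ : 0 ≤ ρ)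
    {PA : Matrix P P ℂ} {PB : Matrix Q Q ℂ} (hPA : IsStarProjection PA)
    (hPB : IsStarProjection PB) (hPBρ : Commute PB (ptraceFst ρ)) :
    ptraceFst ((PA ⊗ₖ PB) * ρ * (PA ⊗ₖ PB)) ≤ ptraceFst ρ := by
  have hswap : ((PA ⊗ₖ PB) * ρ * (PA ⊗ₖ PB)).submatrix Prod.swap Prod.swap =
      (PB ⊗ₖ PA) * ρ.submatrix Prod.swap Prod.swap * (PB ⊗ₖ PA) := by
    have hkron : (PA ⊗ₖ PB).submatrix Prod.swap Prod.swap = PB ⊗ₖ PA := by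
      ext ⟨b, a⟩ ⟨b', a'⟩
      exact mul_comm _ _
    simp only [← hkron, show (Prod.swap : Q × P → P × Q) = Equiv.prodComm Q P from rfl,
      submatrix_mul_equiv]
  rw [ptraceFst_eq_ptraceSnd_submatrix_swap, hswap]
  exact ptraceSnd_kronecker_conj_le (hρ.posSemidef.submatrix _).nonneg hPB hPA hPBρ

end PartialTrace

theorem marginal_bound_sandwich_general {A B : Type*}
    [Fintype A] [Fintype B]
    (ρ : Matrix (A × B) (A × B) ℂ) (hρ : ρ.PosSemidef)
    (PA : Matrix A A ℂ) (PB : Matrix B B ℂ)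
    (hPAH : PA.IsHermitian) (hPA2 : PA * PA = PA)
    (hPAc : PA * ptraceSnd ρ = ptraceSnd ρ * PA)
    (hPBH : PB.IsHermitian) (hPB2 : PB * PB = PB)
    (hPBc : PB * ptraceFst ρ = ptraceFst ρ * PB)
    (c : ℝ) (hc1 : c < 1)
    (ht : 1 - c ≤ (((PA ⊗ₖ PB) * ρ).trace).re) :
    ((1 / (1 - c)) • ptraceSnd ρ -
        ptraceSnd (((((PA ⊗ₖ PB) * ρ).trace.re)⁻¹ : ℝ) •
          ((PA ⊗ₖ PB) * ρ * (PA ⊗ₖ PB)))).PosSemidef ∧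
    ((1 / (1 - c)) • ptraceFst ρ -
        ptraceFst (((((PA ⊗ₖ PB) * ρ).trace.re)⁻¹ : ℝ) •
          ((PA ⊗ₖ PB) * ρ * (PA ⊗ₖ PB)))).PosSemidef := by
  have hc : 0 < 1 - c := sub_pos.mpr hc1
  have hscale : (((PA ⊗ₖ PB) * ρ).trace.re)⁻¹ ≤ 1 / (1 - c) := by
    rw [one_div]
    exact inv_anti₀ hc ht
  have hPA : IsStarProjection PA := ⟨hPA2, hPAH⟩
  have hPB : IsStarProjection PB := ⟨hPB2, hPBH⟩
  have hρ0 : 0 ≤ ρ := hρ.nonneg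
  have ht0 : 0 ≤ (((PA ⊗ₖ PB) * ρ).trace.re)⁻¹ := inv_nonneg.mpr (hc.le.trans ht)
  refine ⟨Matrix.le_iff.mp ?_, Matrix.le_iff.mp ?_⟩
  · rw [ptraceSnd_smul]
    exact smul_le_smul hscale (ptraceSnd_kronecker_conj_le hρ0 hPA hPB hPAc)
      ht0 (ptraceSnd_nonneg hρ0)
  · rw [ptraceFst_smul]
    exact smul_le_smul hscale (ptraceFst_kronecker_conj_le hρ0 hPA hPB hPBc)
      ht0 (ptraceFst_nonneg hρ0)

/-- Marginal bound after sandwiching by local spectral projectors. -/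
theorem marginal_bound_sandwich {A B : Type*}
    [Fintype A] [DecidableEq A] [Fintype B] [DecidableEq B]
    (ρ : Matrix (A × B) (A × B) ℂ) (hρ : ρ.PosSemidef) (hρ1 : ρ.trace = 1)
    (PA : Matrix A A ℂ) (PB : Matrix B B ℂ)
    (hPAH : PA.IsHermitian) (hPA2 : PA * PA = PA)
    (hPAc : PA * ptraceSnd ρ = ptraceSnd ρ * PA)
    (hPBH : PB.IsHermitian) (hPB2 : PB * PB = PB)
    (hPBc : PB * ptraceFst ρ = ptraceFst ρ * PB)
    (c : ℝ) (hc0 : 0 ≤ c) (hc1 : c < 1)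
    (ht : 1 - c ≤ (((PA ⊗ₖ PB) * ρ).trace).re) :
    ((1 / (1 - c)) • ptraceSnd ρ -
        ptraceSnd (((((PA ⊗ₖ PB) * ρ).trace.re)⁻¹ : ℝ) •
          ((PA ⊗ₖ PB) * ρ * (PA ⊗ₖ PB)))).PosSemidef ∧
    ((1 / (1 - c)) • ptraceFst ρ -
        ptraceFst (((((PA ⊗ₖ PB) * ρ).trace.re)⁻¹ : ℝ) •
          ((PA ⊗ₖ PB) * ρ * (PA ⊗ₖ PB)))).PosSemidef :=
  marginal_bound_sandwich_general ρ hρ PA PB hPAH hPA2 hPAc hPBH hPB2 hPBc c hc1 ht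
end
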